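/- arXiv:1403.1424 — 4 statements merged into one kernel-verified Lean document; each statement's English description precedes it below -/
import Mathlib

section
/- (Golden–Thompson inequality) For Hermitian matrices A and B of the same size, Tr(e^{A+B}) ≤ Tr(e^A e^B). -/
open Matrix
open scoped ComplexOrder

noncomputable def matLog {n : Type*} [Fintype n] [DecidableEq n] (A : Matrix n n ℂ) : Matrix n n ℂ :=
  cfc Real.log A

noncomputable def msqrt {n : Type*} [Fintype n] [DecidableEq n] (A : Matrix n n ℂ) : Matrix n n ℂ :=
  cfc Real.sqrt A

noncomputable def mexp {n : Type*} [Fintype n] [DecidableEq n] (A : Matrix n n ℂ) : Matrix n n ℂ :=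
  NormedSpace.exp A

/-- trace norm ‖A‖₁ = Tr √(AᴴA) -/
noncomputable def traceNorm {n : Type*} [Fintype n] [DecidableEq n] (A : Matrix n n ℂ) : ℝ :=
  (msqrt (Aᴴ * A)).trace.re

/-- Hilbert–Schmidt norm ‖A‖₂ = √Tr(AᴴA) -/
noncomputable def hsNorm {n : Type*} [Fintype n] [DecidableEq n] (A : Matrix n n ℂ) : ℝ :=
  Real.sqrt ((Aᴴ * A).trace.re)

/-- von Neumann entropy S(ρ) = −Tr(ρ log ρ) -/
noncomputable def vnEnt {n : Type*} [Fintype n] [DecidableEq n] (ρ : Matrix n n ℂ) : ℝ :=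
  -((ρ * matLog ρ).trace.re)

/-!
The Hilbert–Schmidt inner product `⟪X, Y⟫ = Tr (Xᴴ Y)` and its Cauchy–Schwarz inequality give,
for Hermitian `S`, `T`, the trace inequality `Re Tr ((S T) ^ 2 ^ k) ≤ Re Tr (S ^ 2 ^ k T ^ 2 ^ k)`.
It is proved by doubling the exponent, together with the norm bound `‖Z ^ 2m‖₂ ≤ ‖(Zᴴ Z) ^ m‖₂`:
each doubling step of either inequality uses both at the previous exponent.

For `S = exp (A / 2 ^ k)` and `T = exp (B / 2 ^ k)` the right-hand side is `Re Tr (exp A exp B)`,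
while by the Lie product formula `(exp (x / m) exp (y / m)) ^ m → exp (x + y)` the left-hand side
tends to `Re Tr exp (A + B)`. The Lie product formula holds in every Banach algebra: the factors
`exp (x / m) exp (y / m)` and `exp ((x + y) / m)` differ by `o(1 / m)`, since both have derivative
`x + y` at `0`, and telescoping loses at most a factor `m exp (‖x‖ + ‖y‖)`.
-/

open Filter Topology NormedSpace

section

variable {𝔸 : Type*} [NormedRing 𝔸] [NormOneClass 𝔸]

theorem norm_pow_sub_pow_le {P Q : 𝔸} {C : ℝ} (hP : ‖P‖ ≤ C) (hQ : ‖Q‖ ≤ C) (m : ℕ) :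
    ‖P ^ m - Q ^ m‖ ≤ m * C ^ (m - 1) * ‖P - Q‖ := by
  induction m with
  | zero => simp
  | succ m ih =>
    have hC : 0 ≤ C := (norm_nonneg P).trans hP
    have hPm : ‖P ^ m‖ ≤ C ^ m := (norm_pow_le P m).trans (pow_le_pow_left₀ (norm_nonneg P) hP m)
    calc ‖P ^ (m + 1) - Q ^ (m + 1)‖ = ‖P ^ m * (P - Q) + (P ^ m - Q ^ m) * Q‖ := by
          congr 1; noncomm_ring
      _ ≤ C ^ m * ‖P - Q‖ + m * C ^ (m - 1) * ‖P - Q‖ * C := by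
          refine (norm_add_le _ _).trans (add_le_add ?_ ?_) <;> refine (norm_mul_le _ _).trans ?_
          · gcongr
          · exact mul_le_mul ih hQ (norm_nonneg _) (by positivity)
      _ = (m + 1 : ℕ) * C ^ (m + 1 - 1) * ‖P - Q‖ := by
          rcases m with _ | m
          · simp
          · push_cast; simp only [pow_succ]; ring

end

namespace NormedSpace

variable {𝔸 : Type*} [NormedRing 𝔸] [NormedAlgebra ℝ 𝔸]

theorem norm_exp_le_exp_norm [NormOneClass 𝔸] (x : 𝔸) : ‖exp x‖ ≤ Real.exp ‖x‖ := by
  rw [Real.exp_eq_exp_ℝ, exp_eq_tsum ℝ, exp_eq_tsum ℝ]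
  refine (norm_tsum_le_tsum_norm (norm_expSeries_summable' x)).trans
    ((norm_expSeries_summable' x).tsum_le_tsum (fun k => ?_) (expSeries_summable' ‖x‖))
  rw [norm_smul, smul_eq_mul, norm_inv, Real.norm_natCast]
  gcongr
  exact norm_pow_le x k

variable [CompleteSpace 𝔸]

theorem exp_inv_natCast_smul_pow {m : ℕ} (hm : m ≠ 0) (x : 𝔸) :
    exp ((m : ℝ)⁻¹ • x) ^ m = exp x := by
  let : NormedAlgebra ℚ 𝔸 := NormedAlgebra.restrictScalars ℚ ℝ 𝔸
  rw [← exp_nsmul, ← Nat.cast_smul_eq_nsmul ℝ, smul_inv_smul₀ (Nat.cast_ne_zero.2 hm)]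

theorem isLittleO_exp_smul_mul_exp_smul_sub_exp_smul (x y : 𝔸) :
    (fun t : ℝ => exp (t • x) * exp (t • y) - exp (t • (x + y))) =o[𝓝 0] fun t => t := by
  have hderiv := ((hasDerivAt_exp_smul_const' x (0 : ℝ)).mul
    (hasDerivAt_exp_smul_const y (0 : ℝ))).sub (hasDerivAt_exp_smul_const (x + y) (0 : ℝ))
  rw [hasDerivAt_iff_isLittleO_nhds_zero] at hderiv
  simpa using hderiv

theorem norm_exp_inv_smul_mul_exp_inv_smul_pow_sub_exp_add_le [NormOneClass 𝔸] (x y : 𝔸) {m : ℕ}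
    (hm : m ≠ 0) :
    ‖(exp ((m : ℝ)⁻¹ • x) * exp ((m : ℝ)⁻¹ • y)) ^ m - exp (x + y)‖ ≤ Real.exp (‖x‖ + ‖y‖) *
      (m * ‖exp ((m : ℝ)⁻¹ • x) * exp ((m : ℝ)⁻¹ • y) - exp ((m : ℝ)⁻¹ • (x + y))‖) := by
  set s := ‖x‖ + ‖y‖
  have hexp (z : 𝔸) : ‖exp ((m : ℝ)⁻¹ • z)‖ ≤ Real.exp ((m : ℝ)⁻¹ * ‖z‖) := by
    simpa [norm_smul] using norm_exp_le_exp_norm ((m : ℝ)⁻¹ • z)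
  have hP : ‖exp ((m : ℝ)⁻¹ • x) * exp ((m : ℝ)⁻¹ • y)‖ ≤ Real.exp ((m : ℝ)⁻¹ * s) :=
    calc _ ≤ Real.exp ((m : ℝ)⁻¹ * ‖x‖) * Real.exp ((m : ℝ)⁻¹ * ‖y‖) :=
          (norm_mul_le _ _).trans (mul_le_mul (hexp x) (hexp y) (norm_nonneg _) (by positivity))
      _ = Real.exp ((m : ℝ)⁻¹ * s) := by rw [← Real.exp_add, mul_add]
  have hQ : ‖exp ((m : ℝ)⁻¹ • (x + y))‖ ≤ Real.exp ((m : ℝ)⁻¹ * s) :=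
    (hexp _).trans (Real.exp_le_exp.2 (by gcongr; exact norm_add_le x y))
  have hpow : Real.exp ((m : ℝ)⁻¹ * s) ^ (m - 1) ≤ Real.exp s :=
    calc _ ≤ Real.exp ((m : ℝ)⁻¹ * s) ^ m :=
          pow_le_pow_right₀ (Real.one_le_exp (by positivity)) (Nat.sub_le m 1)
      _ = Real.exp s := by
          rw [← Real.exp_nat_mul, ← mul_assoc, mul_inv_cancel₀ (by positivity), one_mul]
  rw [← exp_inv_natCast_smul_pow hm (x + y)]
  refine (norm_pow_sub_pow_le hP hQ m).trans ?_
  calc _ = Real.exp ((m : ℝ)⁻¹ * s) ^ (m - 1) *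
        (m * ‖exp ((m : ℝ)⁻¹ • x) * exp ((m : ℝ)⁻¹ • y) - exp ((m : ℝ)⁻¹ • (x + y))‖) := by ring
    _ ≤ _ := by gcongr

theorem tendsto_exp_inv_smul_mul_exp_inv_smul_pow [NormOneClass 𝔸] (x y : 𝔸) :
    Tendsto (fun m : ℕ => (exp ((m : ℝ)⁻¹ • x) * exp ((m : ℝ)⁻¹ • y)) ^ m) atTop
      (𝓝 (exp (x + y))) := by
  have hsmall : Tendsto (fun m : ℕ => (m : ℝ) * ‖exp ((m : ℝ)⁻¹ • x) * exp ((m : ℝ)⁻¹ • y)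
      - exp ((m : ℝ)⁻¹ • (x + y))‖) atTop (𝓝 0) := by
    refine (((isLittleO_exp_smul_mul_exp_smul_sub_exp_smul x y).norm_left.comp_tendsto
      (tendsto_inv_atTop_nhds_zero_nat (𝕜 := ℝ))).tendsto_div_nhds_zero).congr fun m => ?_
    simp [div_eq_mul_inv, mul_comm]
  refine tendsto_iff_norm_sub_tendsto_zero.2 (squeeze_zero' (.of_forall fun _ => norm_nonneg _) ?_
    (by simpa only [mul_zero] using hsmall.const_mul (Real.exp (‖x‖ + ‖y‖))))
  filter_upwards [eventually_ne_atTop 0] with m hm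
  exact norm_exp_inv_smul_mul_exp_inv_smul_pow_sub_exp_add_le x y hm

end NormedSpace

namespace Matrix

variable {n : Type*} [Fintype n]

theorem trace_conjTranspose_mul_eq_inner (X Y : Matrix n n ℂ) :
    (Xᴴ * Y).trace = inner ℂ (WithLp.toLp 2 (vec X)) (WithLp.toLp 2 (vec Y)) := by
  rw [EuclideanSpace.inner_toLp_toLp, dotProduct_comm, star_vec_dotProduct_vec]

variable [DecidableEq n]

theorem trace_mul_pow_comm {R : Type*} [CommSemiring R] (X Y : Matrix n n R) (k : ℕ) :
    ((X * Y) ^ k).trace = ((Y * X) ^ k).trace := by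
  cases k with
  | zero => simp
  | succ k =>
    rw [pow_succ', mul_assoc, trace_mul_comm, mul_assoc, mul_pow_mul, ← mul_assoc, ← pow_succ']

theorem hsNorm_eq_norm_vec (X : Matrix n n ℂ) : hsNorm X = ‖WithLp.toLp 2 (vec X)‖ := by
  rw [hsNorm, trace_conjTranspose_mul_eq_inner, ← RCLike.re_to_complex, inner_self_eq_norm_sq,
    Real.sqrt_sq (norm_nonneg _)]

theorem hsNorm_nonneg (X : Matrix n n ℂ) : 0 ≤ hsNorm X := Real.sqrt_nonneg _

theorem hsNorm_sq (X : Matrix n n ℂ) : hsNorm X ^ 2 = (Xᴴ * X).trace.re := by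
  rw [hsNorm_eq_norm_vec, trace_conjTranspose_mul_eq_inner, ← RCLike.re_to_complex,
    inner_self_eq_norm_sq]

theorem re_trace_conjTranspose_mul_le (X Y : Matrix n n ℂ) :
    (Xᴴ * Y).trace.re ≤ hsNorm X * hsNorm Y := by
  rw [trace_conjTranspose_mul_eq_inner, hsNorm_eq_norm_vec, hsNorm_eq_norm_vec]
  exact re_inner_le_norm (𝕜 := ℂ) _ _

theorem hsNorm_conjTranspose (X : Matrix n n ℂ) : hsNorm Xᴴ = hsNorm X := by
  rw [hsNorm, hsNorm, conjTranspose_conjTranspose, trace_mul_comm]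

theorem re_trace_mul_self_le (Z : Matrix n n ℂ) : (Z * Z).trace.re ≤ hsNorm Z ^ 2 := by
  simpa [hsNorm_conjTranspose, sq] using re_trace_conjTranspose_mul_le Zᴴ Z

theorem IsHermitian.re_trace_mul_le {P : Matrix n n ℂ} (hP : P.IsHermitian) (Q : Matrix n n ℂ) :
    (P * Q).trace.re ≤ hsNorm P * hsNorm Q := by
  simpa [hP.eq] using re_trace_conjTranspose_mul_le P Q

theorem IsHermitian.hsNorm_pow_sq {H : Matrix n n ℂ} (hH : H.IsHermitian) (m : ℕ) :
    hsNorm (H ^ m) ^ 2 = (H ^ (2 * m)).trace.re := by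
  rw [hsNorm_sq, conjTranspose_pow, hH.eq, ← pow_add, two_mul]

theorem hsNorm_pow_mul_conjTranspose_self (Z : Matrix n n ℂ) (k : ℕ) :
    hsNorm ((Z * Zᴴ) ^ k) = hsNorm ((Zᴴ * Z) ^ k) := by
  rw [hsNorm, hsNorm, conjTranspose_pow, conjTranspose_pow,
    (isHermitian_mul_conjTranspose_self Z).eq, (isHermitian_conjTranspose_mul_self Z).eq,
    ← pow_add, ← pow_add, trace_mul_pow_comm]

theorem re_trace_pow_mul_pow_le_hsNorm_sq (Z : Matrix n n ℂ) (k : ℕ) :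
    ((Zᴴ * Z) ^ k * (Z * Zᴴ) ^ k).trace.re ≤ hsNorm ((Zᴴ * Z) ^ k) ^ 2 :=
  calc _ ≤ hsNorm ((Zᴴ * Z) ^ k) * hsNorm ((Z * Zᴴ) ^ k) :=
        ((isHermitian_conjTranspose_mul_self Z).pow k).re_trace_mul_le _
    _ = _ := by rw [hsNorm_pow_mul_conjTranspose_self, sq]

theorem trace_conjTranspose_sq_mul_sq_pow (Z : Matrix n n ℂ) (k : ℕ) :
    (((Z ^ 2)ᴴ * Z ^ 2) ^ k).trace = ((Zᴴ * Z * (Z * Zᴴ)) ^ k).trace := by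
  have h : (Z ^ 2)ᴴ * Z ^ 2 = Zᴴ * (Zᴴ * Z * Z) := by
    rw [conjTranspose_pow, sq, sq]; noncomm_ring
  rw [h, trace_mul_pow_comm, show Zᴴ * Z * Z * Zᴴ = Zᴴ * Z * (Z * Zᴴ) by noncomm_ring]

theorem IsHermitian.trace_conjTranspose_mul_mul_pow {S T : Matrix n n ℂ} (hS : S.IsHermitian)
    (hT : T.IsHermitian) (k : ℕ) :
    (((S * T)ᴴ * (S * T)) ^ k).trace = ((S ^ 2 * T ^ 2) ^ k).trace := by
  have h : (S * T)ᴴ * (S * T) = T * (S ^ 2 * T) := by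
    rw [conjTranspose_mul, hS.eq, hT.eq, sq]; noncomm_ring
  rw [h, trace_mul_pow_comm, mul_assoc, ← sq]

variable (n) in
def NormPowBound (m : ℕ) : Prop :=
  ∀ Z : Matrix n n ℂ, hsNorm (Z ^ (2 * m)) ≤ hsNorm ((Zᴴ * Z) ^ m)

variable (n) in
def TracePowBound (m : ℕ) : Prop :=
  ∀ S T : Matrix n n ℂ, S.IsHermitian → T.IsHermitian →
    ((S * T) ^ (2 * m)).trace.re ≤ (S ^ (2 * m) * T ^ (2 * m)).trace.re

theorem normPowBound_one : NormPowBound n 1 := fun Z => by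
  refine le_of_pow_le_pow_left₀ two_ne_zero (hsNorm_nonneg _) ?_
  calc hsNorm (Z ^ (2 * 1)) ^ 2 = ((Zᴴ * Z * (Z * Zᴴ)) ^ 1).trace.re := by
        rw [hsNorm_sq, ← trace_conjTranspose_sq_mul_sq_pow, pow_one]
    _ ≤ hsNorm ((Zᴴ * Z) ^ 1) ^ 2 := by
        simpa using re_trace_pow_mul_pow_le_hsNorm_sq Z 1

theorem tracePowBound_one : TracePowBound n 1 := fun S T hS hT =>
  calc ((S * T) ^ (2 * 1)).trace.re ≤ hsNorm (S * T) ^ 2 := by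
        simpa [sq] using re_trace_mul_self_le (S * T)
    _ = _ := by
        rw [hsNorm_sq, ← pow_one ((S * T)ᴴ * (S * T)), hS.trace_conjTranspose_mul_mul_pow hT,
          pow_one]

theorem NormPowBound.two_mul {m : ℕ} (hN : NormPowBound n m) (hT : TracePowBound n m) :
    NormPowBound n (2 * m) := fun Z => by
  have hZ := isHermitian_conjTranspose_mul_self Z
  refine le_of_pow_le_pow_left₀ two_ne_zero (hsNorm_nonneg _) ?_
  calc hsNorm (Z ^ (2 * (2 * m))) ^ 2 = hsNorm ((Z ^ 2) ^ (2 * m)) ^ 2 := by rw [← pow_mul]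
    _ ≤ hsNorm (((Z ^ 2)ᴴ * Z ^ 2) ^ m) ^ 2 := pow_le_pow_left₀ (hsNorm_nonneg _) (hN _) 2
    _ = ((Zᴴ * Z * (Z * Zᴴ)) ^ (2 * m)).trace.re := by
        rw [(isHermitian_conjTranspose_mul_self _).hsNorm_pow_sq, trace_conjTranspose_sq_mul_sq_pow]
    _ ≤ ((Zᴴ * Z) ^ (2 * m) * (Z * Zᴴ) ^ (2 * m)).trace.re :=
        hT _ _ hZ (isHermitian_mul_conjTranspose_self Z)
    _ ≤ hsNorm ((Zᴴ * Z) ^ (2 * m)) ^ 2 := re_trace_pow_mul_pow_le_hsNorm_sq Z _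

theorem TracePowBound.two_mul {m : ℕ} (hN : NormPowBound n m) (hT : TracePowBound n m) :
    TracePowBound n (2 * m) := fun S T hS hT' =>
  calc ((S * T) ^ (2 * (2 * m))).trace.re = ((S * T) ^ (2 * m) * (S * T) ^ (2 * m)).trace.re := by
        rw [← pow_add, ← _root_.two_mul]
    _ ≤ hsNorm ((S * T) ^ (2 * m)) ^ 2 := re_trace_mul_self_le _
    _ ≤ hsNorm (((S * T)ᴴ * (S * T)) ^ m) ^ 2 := pow_le_pow_left₀ (hsNorm_nonneg _) (hN _) 2
    _ = ((S ^ 2 * T ^ 2) ^ (2 * m)).trace.re := by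
        rw [(isHermitian_conjTranspose_mul_self _).hsNorm_pow_sq,
          hS.trace_conjTranspose_mul_mul_pow hT']
    _ ≤ ((S ^ 2) ^ (2 * m) * (T ^ 2) ^ (2 * m)).trace.re := hT _ _ (hS.pow 2) (hT'.pow 2)
    _ = _ := by rw [← pow_mul, ← pow_mul]

theorem normPowBound_and_tracePowBound_two_pow (j : ℕ) :
    NormPowBound n (2 ^ j) ∧ TracePowBound n (2 ^ j) := by
  induction j with
  | zero => exact ⟨normPowBound_one, tracePowBound_one⟩
  | succ j ih => rw [pow_succ']; exact ⟨ih.1.two_mul ih.2, ih.2.two_mul ih.1⟩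

theorem IsHermitian.re_trace_mul_pow_two_pow_le {S T : Matrix n n ℂ} (hS : S.IsHermitian)
    (hT : T.IsHermitian) (k : ℕ) :
    ((S * T) ^ 2 ^ k).trace.re ≤ (S ^ 2 ^ k * T ^ 2 ^ k).trace.re := by
  cases k with
  | zero => simp
  | succ k => rw [pow_succ']; exact (normPowBound_and_tracePowBound_two_pow k).2 S T hS hT

theorem exp_inv_natCast_smul_pow {𝕜 : Type*} [RCLike 𝕜] {m : ℕ} (hm : m ≠ 0) (A : Matrix n n 𝕜) :
    exp ((m : ℝ)⁻¹ • A) ^ m = exp A := by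
  rw [← exp_nsmul, ← Nat.cast_smul_eq_nsmul ℝ, smul_inv_smul₀ (Nat.cast_ne_zero.2 hm)]

theorem tendsto_exp_inv_smul_mul_exp_inv_smul_pow {𝕜 : Type*} [RCLike 𝕜] (A B : Matrix n n 𝕜) :
    Tendsto (fun m : ℕ => (exp ((m : ℝ)⁻¹ • A) * exp ((m : ℝ)⁻¹ • B)) ^ m) atTop
      (𝓝 (exp (A + B))) := by
  -- the `ℓ∞` operator norm has `‖1‖ = 1` only when `n` is nonempty
  rcases isEmpty_or_nonempty n with hn | hn
  · exact tendsto_const_nhds.congr fun _ => Subsingleton.elim _ _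
  · let : NormedRing (Matrix n n 𝕜) := Matrix.linftyOpNormedRing
    let : NormedAlgebra ℝ (Matrix n n 𝕜) := Matrix.linftyOpNormedAlgebra
    have : NormOneClass (Matrix n n 𝕜) := Matrix.linfty_opNormOneClass
    exact NormedSpace.tendsto_exp_inv_smul_mul_exp_inv_smul_pow A B

end Matrix

theorem golden_thompson {n : Type*} [Fintype n] [DecidableEq n]
    (A B : Matrix n n ℂ) (hA : A.IsHermitian) (hB : B.IsHermitian) :
    (mexp (A + B)).trace.re ≤ (mexp A * mexp B).trace.re := by
  have hlim := ((Complex.continuous_re.comp continuous_id.matrix_trace).tendsto _).comp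
    ((Matrix.tendsto_exp_inv_smul_mul_exp_inv_smul_pow A B).comp
      (tendsto_pow_atTop_atTop_of_one_lt one_lt_two))
  refine le_of_tendsto' hlim fun k => ?_
  dsimp only [Function.comp_apply, id]
  have hk : 2 ^ k ≠ 0 := pow_ne_zero k two_ne_zero
  have hS := (hA.smul (IsSelfAdjoint.all ((2 ^ k : ℕ) : ℝ)⁻¹)).exp
  have hT := (hB.smul (IsSelfAdjoint.all ((2 ^ k : ℕ) : ℝ)⁻¹)).exp
  have := hS.re_trace_mul_pow_two_pow_le hT k
  rwa [Matrix.exp_inv_natCast_smul_pow hk, Matrix.exp_inv_natCast_smul_pow hk] at this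
end

section
/- (Powers–Størmer inequality) For positive semi-definite matrices M and N, ‖√M − √N‖₂² ≤ ‖M − N‖₁, where ‖·‖₂ is the Hilbert–Schmidt norm and ‖·‖₁ is the trace norm. -/
/-!
Put A = √M, B = √N and C = A - B = C⁺ - C⁻. Since the trace of a product of two positive matrices
is nonnegative and A + B ∓ C equals 2B or 2A,
Tr C² = Tr C⁺C - Tr C⁻C ≤ Tr (C⁺ + C⁻)(A + B) = Tr |C|(A + B).
As |C| = sgn(C) C = C sgn(C) and C(A + B) + (A + B)C = 2(M - N), the right side is Tr sgn(C)(M - N),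
which is at most Tr |M - N| because -1 ≤ sgn(C) ≤ 1.
-/

open Matrix
open scoped ComplexOrder

open scoped MatrixOrder

namespace Matrix

variable {𝕜 n : Type*} [RCLike 𝕜] [Fintype n] [DecidableEq n]

lemma re_trace_mul_le_re_trace_mul {P X Y : Matrix n n 𝕜} (hP : 0 ≤ P) (hXY : X ≤ Y) :
    RCLike.re (P * X).trace ≤ RCLike.re (P * Y).trace := by
  have hconj : 0 ≤ CFC.sqrt P * (Y - X) * CFC.sqrt P :=
    conjugate_nonneg_of_nonneg (sub_nonneg.mpr hXY) (CFC.sqrt_nonneg P)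
  have htrace : (CFC.sqrt P * (Y - X) * CFC.sqrt P).trace = (P * Y).trace - (P * X).trace := by
    rw [trace_mul_cycle, CFC.sqrt_mul_sqrt_self P, mul_sub, trace_sub]
  rw [← sub_nonneg, ← map_sub, ← htrace]
  exact (RCLike.nonneg_iff.mp hconj.posSemidef.trace_nonneg).1

lemma re_trace_sub_mul_self_le {A B : Matrix n n 𝕜} (hA : 0 ≤ A) (hB : 0 ≤ B) :
    RCLike.re ((A - B) * (A - B)).trace ≤ RCLike.re (CFC.abs (A - B) * (A + B)).trace := by
  set C := A - B
  have hC : IsSelfAdjoint C := hA.isSelfAdjoint.sub hB.isSelfAdjoint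
  have hpos : RCLike.re (C⁺ * C).trace ≤ RCLike.re (C⁺ * (A + B)).trace := by
    refine re_trace_mul_le_re_trace_mul (CFC.posPart_nonneg C) ?_
    rw [← sub_nonneg, show A + B - C = B + B by simp only [C]; abel]
    exact add_nonneg hB hB
  have hneg : RCLike.re (C⁻ * -C).trace ≤ RCLike.re (C⁻ * (A + B)).trace := by
    refine re_trace_mul_le_re_trace_mul (CFC.negPart_nonneg C) ?_
    rw [← sub_nonneg, show A + B - -C = A + A by simp only [C]; abel]
    exact add_nonneg hA hA
  have hsplit : C * C = C⁺ * C + C⁻ * -C := by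
    nth_rewrite 1 [← CFC.posPart_sub_negPart C]
    noncomm_ring
  calc RCLike.re (C * C).trace
      = RCLike.re (C⁺ * C).trace + RCLike.re (C⁻ * -C).trace := by
        rw [hsplit, trace_add, map_add]
    _ ≤ RCLike.re (C⁺ * (A + B)).trace + RCLike.re (C⁻ * (A + B)).trace := add_le_add hpos hneg
    _ = RCLike.re (CFC.abs C * (A + B)).trace := by
        rw [← CFC.posPart_add_negPart C, add_mul, trace_add, map_add]

lemma re_trace_mul_le_re_trace_abs {S D : Matrix n n 𝕜} (hD : IsSelfAdjoint D)
    (hS₁ : -1 ≤ S) (hS₂ : S ≤ 1) :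
    RCLike.re (S * D).trace ≤ RCLike.re (CFC.abs D).trace := by
  have hpos : RCLike.re (D⁺ * S).trace ≤ RCLike.re (D⁺ * 1).trace :=
    re_trace_mul_le_re_trace_mul (CFC.posPart_nonneg D) hS₂
  have hneg : RCLike.re (D⁻ * -S).trace ≤ RCLike.re (D⁻ * 1).trace :=
    re_trace_mul_le_re_trace_mul (CFC.negPart_nonneg D) (neg_le.mp hS₁)
  have hsplit : D * S = D⁺ * S + D⁻ * -S := by
    nth_rewrite 1 [← CFC.posPart_sub_negPart D]
    noncomm_ring
  calc RCLike.re (S * D).trace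
      = RCLike.re (D⁺ * S).trace + RCLike.re (D⁻ * -S).trace := by
        rw [trace_mul_comm, hsplit, trace_add, map_add]
    _ ≤ RCLike.re (D⁺ * 1).trace + RCLike.re (D⁻ * 1).trace := add_le_add hpos hneg
    _ = RCLike.re (CFC.abs D).trace := by
        rw [mul_one, mul_one, ← CFC.posPart_add_negPart D, trace_add, map_add]

lemma cfc_sign_le_one (C : Matrix n n 𝕜) : cfc Real.sign C ≤ 1 :=
  cfc_le_one _ _ fun x _ => by rcases Real.sign_apply_eq x with h | h | h <;> norm_num [h]

lemma neg_one_le_cfc_sign (C : Matrix n n 𝕜) : -1 ≤ cfc Real.sign C := by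
  rw [neg_le, ← cfc_neg]
  exact cfc_le_one _ _ fun x _ => by rcases Real.sign_apply_eq x with h | h | h <;> norm_num [h]

lemma cfc_sign_mul_self {C : Matrix n n 𝕜} (hC : IsSelfAdjoint C) :
    cfc Real.sign C * C = CFC.abs C := by
  nth_rewrite 2 [← cfc_id' ℝ C]
  rw [← cfc_mul _ _ C (C.finite_real_spectrum.continuousOn _), CFC.abs_eq_cfc_norm C]
  refine cfc_congr fun x _ => ?_
  rcases lt_trichotomy x 0 with h | rfl | h <;>
    simp [Real.sign_of_neg, Real.sign_of_pos, abs_of_neg, abs_of_pos, *]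

lemma trace_abs_sub_mul_add {A B : Matrix n n 𝕜} (h : IsSelfAdjoint (A - B)) :
    (CFC.abs (A - B) * (A + B)).trace = (cfc Real.sign (A - B) * (A * A - B * B)).trace := by
  set C := A - B
  set S := cfc Real.sign C
  have hSC : S * C = CFC.abs C := cfc_sign_mul_self h
  have hcomm : Commute C S := cfc_id' ℝ C ▸ cfc_commute_cfc (fun x : ℝ => x) Real.sign C
  have hanti : C * (A + B) + (A + B) * C = (A * A - B * B) + (A * A - B * B) := by
    simp only [C]
    noncomm_ring
  refine mul_left_cancel₀ (two_ne_zero (α := 𝕜)) ?_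
  calc 2 * (CFC.abs C * (A + B)).trace
      = (S * C * (A + B)).trace + (C * S * (A + B)).trace := by
        rw [hcomm.eq, hSC, two_mul]
    _ = (S * (C * (A + B) + (A + B) * C)).trace := by
        rw [mul_add S, trace_add, ← mul_assoc S C, ← mul_assoc S (A + B) C,
          trace_mul_cycle S (A + B) C]
    _ = 2 * (S * (A * A - B * B)).trace := by
        rw [hanti, mul_add, trace_add, two_mul]

end Matrix

section

variable {n : Type*} [Fintype n] [DecidableEq n]

lemma msqrt_eq_sqrt {A : Matrix n n ℂ} (hA : 0 ≤ A) : msqrt A = CFC.sqrt A := by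
  rw [msqrt, CFC.sqrt_eq_real_sqrt A hA, cfcₙ_eq_cfc]

lemma sq_hsNorm (C : Matrix n n ℂ) : hsNorm C ^ 2 = (Cᴴ * C).trace.re :=
  Real.sq_sqrt (Complex.nonneg_iff.mp (posSemidef_conjTranspose_mul_self C).trace_nonneg).1

lemma traceNorm_eq_re_trace_abs (D : Matrix n n ℂ) : traceNorm D = (CFC.abs D).trace.re := by
  rw [traceNorm, msqrt_eq_sqrt (posSemidef_conjTranspose_mul_self D).nonneg]
  rfl

end

theorem powers_stormer {n : Type*} [Fintype n] [DecidableEq n]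
    (M N : Matrix n n ℂ) (hM : M.PosSemidef) (hN : N.PosSemidef) :
    hsNorm (msqrt M - msqrt N) ^ 2 ≤ traceNorm (M - N) := by
  rw [msqrt_eq_sqrt hM.nonneg, msqrt_eq_sqrt hN.nonneg]
  set A := CFC.sqrt M
  set B := CFC.sqrt N
  have hA : 0 ≤ A := CFC.sqrt_nonneg M
  have hB : 0 ≤ B := CFC.sqrt_nonneg N
  have hC : IsSelfAdjoint (A - B) := hA.isSelfAdjoint.sub hB.isSelfAdjoint
  calc hsNorm (A - B) ^ 2
      = RCLike.re ((A - B) * (A - B)).trace := by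
        rw [sq_hsNorm, show (A - B)ᴴ = A - B from hC]
        rfl
    _ ≤ RCLike.re (CFC.abs (A - B) * (A + B)).trace := re_trace_sub_mul_self_le hA hB
    _ = RCLike.re (cfc Real.sign (A - B) * (M - N)).trace := by
        rw [trace_abs_sub_mul_add hC, CFC.sqrt_mul_sqrt_self M, CFC.sqrt_mul_sqrt_self N]
    _ ≤ RCLike.re (CFC.abs (M - N)).trace :=
        re_trace_mul_le_re_trace_abs (hM.isHermitian.sub hN.isHermitian)
          (neg_one_le_cfc_sign _) (cfc_sign_le_one _)
    _ = traceNorm (M - N) := (traceNorm_eq_re_trace_abs _).symm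
end

section
/- For positive semi-definite matrices M and N, ‖M − N‖₁ ≤ ‖√M − √N‖₂ · ‖√M + √N‖₂. -/
open Matrix
open scoped ComplexOrder

/-!
With `A = √M - √N` and `B = √M + √N` one has `A B + B A = 2 (M - N)`. Writing `|X| = W X` for the
Hermitian matrix `X = M - N` and a unitary `W` (the sign of `X`), this gives
`2 Tr |X| = Re Tr (W A B) + Re Tr (W B A)`. Since `A` and `B` are Hermitian, both terms are
Hilbert–Schmidt inner products, bounded by `‖A‖₂ ‖B‖₂` by Cauchy–Schwarz and unitary invariance.
-/

section

open scoped MatrixOrder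

variable {n : Type*} [Fintype n] [DecidableEq n]

lemma msqrt_eq_cfcSqrt {A : Matrix n n ℂ} (hA : A.PosSemidef) : msqrt A = CFC.sqrt A := by
  rw [msqrt, CFC.sqrt_eq_real_sqrt A hA.nonneg, cfcₙ_eq_cfc]

lemma Matrix.PosSemidef.msqrt {A : Matrix n n ℂ} (hA : A.PosSemidef) : (msqrt A).PosSemidef := by
  rw [msqrt_eq_cfcSqrt hA]
  exact (CFC.sqrt_nonneg A).posSemidef

lemma msqrt_mul_msqrt_self {A : Matrix n n ℂ} (hA : A.PosSemidef) : msqrt A * msqrt A = A := by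
  rw [msqrt_eq_cfcSqrt hA]
  exact CFC.sqrt_mul_sqrt_self A hA.nonneg

lemma traceNorm_eq_re_trace_cfcAbs (A : Matrix n n ℂ) : traceNorm A = (CFC.abs A).trace.re := by
  rw [traceNorm, CFC.abs, star_eq_conjTranspose,
    msqrt_eq_cfcSqrt (posSemidef_conjTranspose_mul_self A)]

lemma Matrix.IsHermitian.exists_mem_unitary_mul_eq_cfcAbs {X : Matrix n n ℂ} (hX : X.IsHermitian) :
    ∃ W ∈ unitary (Matrix n n ℂ), W * X = CFC.abs X := by
  -- the sign of `X`, taken to be `1` on its kernel so that it is unitary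
  let s : ℝ → ℝ := fun x ↦ if x < 0 then -1 else 1
  have hs : ContinuousOn s (spectrum ℝ X) := X.finite_real_spectrum.continuousOn _
  refine ⟨cfc s X, (cfc_unitary_iff s X).2 fun x _ ↦ ?_, ?_⟩
  · simp only [s]; split_ifs <;> norm_num
  · calc cfc s X * X = cfc s X * cfc id X := by rw [cfc_id ℝ X]
      _ = cfc (fun x ↦ s x * x) X := (cfc_mul s id X).symm
      _ = CFC.abs X := by
        rw [CFC.abs_eq_cfc_norm X]
        refine cfc_congr fun x _ ↦ ?_
        simp only [s, Real.norm_eq_abs]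
        split_ifs with h
        · rw [abs_of_neg h]; ring
        · rw [abs_of_nonneg (not_lt.1 h)]; ring

lemma hsNorm_unitary_mul {W : Matrix n n ℂ} (hW : W ∈ unitary (Matrix n n ℂ)) (A : Matrix n n ℂ) :
    hsNorm (W * A) = hsNorm A := by
  rw [hsNorm, hsNorm, conjTranspose_mul, mul_assoc, ← mul_assoc Wᴴ, ← star_eq_conjTranspose W,
    Unitary.star_mul_self_of_mem hW, one_mul]

lemma norm_trace_mul_conjTranspose_le (P Q : Matrix n n ℂ) :
    ‖(P * Qᴴ).trace‖ ≤ hsNorm P * hsNorm Q := by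
  let := toMatrixSeminormedAddCommGroup (1 : Matrix n n ℂ) PosSemidef.one
  let := toMatrixInnerProductSpace (1 : Matrix n n ℂ) PosSemidef.one
  have hinner (A B : Matrix n n ℂ) : inner ℂ A B = (B * Aᴴ).trace := by
    show (B * 1 * Aᴴ).trace = _
    rw [mul_one]
  have hnorm (A : Matrix n n ℂ) : ‖A‖ = hsNorm A := by
    rw [norm_eq_sqrt_re_inner (𝕜 := ℂ), hinner, hsNorm, trace_mul_comm]
    rfl
  simpa only [hinner, hnorm, mul_comm (hsNorm Q)] using norm_inner_le_norm (𝕜 := ℂ) Q P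

lemma norm_trace_unitary_mul_mul_le {W A B : Matrix n n ℂ} (hW : W ∈ unitary (Matrix n n ℂ))
    (hB : B.IsHermitian) : ‖(W * A * B).trace‖ ≤ hsNorm A * hsNorm B := by
  simpa only [hB.eq, hsNorm_unitary_mul hW] using norm_trace_mul_conjTranspose_le (W * A) B

lemma traceNorm_le_hsNorm_mul_of_mul_add_mul_eq {X A B : Matrix n n ℂ} (hX : X.IsHermitian)
    (hA : A.IsHermitian) (hB : B.IsHermitian) (h : A * B + B * A = X + X) :
    traceNorm X ≤ hsNorm A * hsNorm B := by
  obtain ⟨W, hW, hWX⟩ := hX.exists_mem_unitary_mul_eq_cfcAbs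
  have htwice : traceNorm X + traceNorm X = (W * A * B).trace.re + (W * B * A).trace.re := by
    rw [traceNorm_eq_re_trace_cfcAbs, ← hWX, ← Complex.add_re, ← trace_add, ← mul_add, ← h,
      mul_add, trace_add, Complex.add_re, mul_assoc, mul_assoc]
  have hAB := (Complex.re_le_norm _).trans (norm_trace_unitary_mul_mul_le (A := A) hW hB)
  have hBA := (Complex.re_le_norm _).trans (norm_trace_unitary_mul_mul_le (A := B) hW hA)
  linarith

end

theorem traceNorm_le_hsNorm_mul {n : Type*} [Fintype n] [DecidableEq n]
    (M N : Matrix n n ℂ) (hM : M.PosSemidef) (hN : N.PosSemidef) :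
    traceNorm (M - N) ≤ hsNorm (msqrt M - msqrt N) * hsNorm (msqrt M + msqrt N) := by
  have hP := hM.msqrt
  have hQ := hN.msqrt
  refine traceNorm_le_hsNorm_mul_of_mul_add_mul_eq (hM.1.sub hN.1) (hP.1.sub hQ.1)
    (hP.1.add hQ.1) ?_
  calc (msqrt M - msqrt N) * (msqrt M + msqrt N) + (msqrt M + msqrt N) * (msqrt M - msqrt N)
      = (msqrt M * msqrt M - msqrt N * msqrt N) + (msqrt M * msqrt M - msqrt N * msqrt N) := by
        noncomm_ring
    _ = M - N + (M - N) := by rw [msqrt_mul_msqrt_self hM, msqrt_mul_msqrt_self hN]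
end

section
/- For a tripartite density matrix ρ_{ABC} with positive definite marginals, I(A:C|B)_ρ ≥ −2 log Tr(√ρ_{ABC} · √(exp(log ρ_{AB} + log ρ_{BC} − log ρ_B))). -/
open Matrix
open scoped ComplexOrder

variable {A B C : Type*}

/-- partial trace over C -/
noncomputable def margAB [Fintype C] (ρ : Matrix (A × B × C) (A × B × C) ℂ) :
    Matrix (A × B) (A × B) ℂ :=
  fun p q => ∑ c, ρ (p.1, p.2, c) (q.1, q.2, c)

/-- partial trace over A -/
noncomputable def margBC [Fintype A] (ρ : Matrix (A × B × C) (A × B × C) ℂ) :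
    Matrix (B × C) (B × C) ℂ :=
  fun p q => ∑ a, ρ (a, p.1, p.2) (a, q.1, q.2)

/-- partial trace over A and C -/
noncomputable def margB [Fintype A] [Fintype C] (ρ : Matrix (A × B × C) (A × B × C) ℂ) :
    Matrix B B ℂ :=
  fun b b' => ∑ a, ∑ c, ρ (a, b, c) (a, b', c)

/-- X ↦ X ⊗ 1_C on the full space -/
noncomputable def embAB [DecidableEq C] (X : Matrix (A × B) (A × B) ℂ) :
    Matrix (A × B × C) (A × B × C) ℂ :=
  fun x y => X (x.1, x.2.1) (y.1, y.2.1) * (if x.2.2 = y.2.2 then 1 else 0)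

/-- X ↦ 1_A ⊗ X on the full space -/
noncomputable def embBC [DecidableEq A] (X : Matrix (B × C) (B × C) ℂ) :
    Matrix (A × B × C) (A × B × C) ℂ :=
  fun x y => (if x.1 = y.1 then 1 else 0) * X x.2 y.2

/-- X ↦ 1_A ⊗ X ⊗ 1_C on the full space -/
noncomputable def embB [DecidableEq A] [DecidableEq C] (X : Matrix B B ℂ) :
    Matrix (A × B × C) (A × B × C) ℂ :=
  fun x y => (if x.1 = y.1 then 1 else 0) * X x.2.1 y.2.1 * (if x.2.2 = y.2.2 then 1 else 0)

variable [Fintype A] [Fintype B] [Fintype C] [DecidableEq A] [DecidableEq B] [DecidableEq C]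

/-- log ρ_AB + log ρ_BC − log ρ_B, implicitly tensored with identities -/
noncomputable def logSum (ρ : Matrix (A × B × C) (A × B × C) ℂ) :
    Matrix (A × B × C) (A × B × C) ℂ :=
  embAB (matLog (margAB ρ)) + embBC (matLog (margBC ρ)) - embB (matLog (margB ρ))

/-- conditional mutual information I(A:C|B) -/
noncomputable def condMI (ρ : Matrix (A × B × C) (A × B × C) ℂ) : ℝ :=
  vnEnt (margAB ρ) + vnEnt (margBC ρ) - vnEnt ρ - vnEnt (margB ρ)

/-!
Write `ρ = ∑ pᵢ |uᵢ⟩⟨uᵢ|` and `σ = ∑ qⱼ |vⱼ⟩⟨vⱼ|`. The overlaps `cᵢⱼ = |⟨uᵢ, vⱼ⟩|²` are doubly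
stochastic, so `D(ρ‖σ) = ∑ pᵢ cᵢⱼ (log pᵢ - log qⱼ)` and `Tr √ρ √σ = ∑ pᵢ cᵢⱼ √(qⱼ / pᵢ)`; Jensen's
inequality for `log` with the weights `pᵢ cᵢⱼ` gives `D(ρ‖σ) ≥ -2 log Tr √ρ √σ`. For
`σ = exp (log ρ_AB + log ρ_BC - log ρ_B)` we have `log σ` equal to that sum, and since
`Tr ρ (X ⊗ 1) = Tr ρ_AB X` (and likewise for the other marginals), `D(ρ‖σ)` is exactly `I(A:C|B)`.
-/

namespace Real

theorem neg_two_log_sum_sqrt_mul_sqrt_le {ι κ : Type*} [Fintype ι] [Fintype κ]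
    {p : ι → ℝ} {q : κ → ℝ} {c : ι → κ → ℝ} (hp : ∀ i, 0 < p i) (hq : ∀ j, 0 < q j)
    (hc : ∀ i j, 0 ≤ c i j) (hc1 : ∀ i, ∑ j, c i j = 1) (hp1 : ∑ i, p i = 1) :
    -2 * log (∑ i, ∑ j, √(p i) * √(q j) * c i j)
      ≤ ∑ i, p i * log (p i) - ∑ i, ∑ j, p i * log (q j) * c i j := by
  set w : ι × κ → ℝ := fun z => p z.1 * c z.1 z.2
  set x : ι × κ → ℝ := fun z => √(q z.2) / √(p z.1)
  have hw0 : ∀ z ∈ Finset.univ, 0 ≤ w z := fun z _ => mul_nonneg (hp z.1).le (hc z.1 z.2)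
  have hw1 : ∑ z, w z = 1 := by
    simp only [w, Fintype.sum_prod_type, ← Finset.mul_sum, hc1, mul_one, hp1]
  have hx : ∀ z ∈ Finset.univ, x z ∈ Set.Ioi 0 := fun z _ =>
    div_pos (sqrt_pos.2 (hq z.2)) (sqrt_pos.2 (hp z.1))
  have jensen := strictConcaveOn_log_Ioi.concaveOn.le_map_sum hw0 hw1 hx
  have hmean : ∑ z, w z • x z = ∑ i, ∑ j, √(p i) * √(q j) * c i j := by
    refine (Fintype.sum_prod_type _).trans (Finset.sum_congr rfl fun i _ =>
      Finset.sum_congr rfl fun j _ => ?_)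
    calc w (i, j) • x (i, j) = p i / √(p i) * √(q j) * c i j := by
          simp only [w, x, smul_eq_mul]
          ring
      _ = √(p i) * √(q j) * c i j := by rw [div_sqrt]
  have hlog : ∑ z, w z • log (x z)
      = (∑ i, ∑ j, p i * log (q j) * c i j - ∑ i, p i * log (p i)) / 2 := by
    have hterm : ∀ i j, w (i, j) • log (x (i, j))
        = (p i * log (q j) * c i j - p i * log (p i) * c i j) / 2 := by
      intro i j
      simp only [w, x, smul_eq_mul, log_div (sqrt_ne_zero'.2 (hq j)) (sqrt_ne_zero'.2 (hp i)),
        log_sqrt (hq j).le, log_sqrt (hp i).le]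
      ring
    simp only [Fintype.sum_prod_type, hterm, ← Finset.sum_div, Finset.sum_sub_distrib,
      ← Finset.mul_sum, hc1, mul_one]
  rw [hmean, hlog] at jensen
  linarith

end Real

namespace Matrix

variable {n 𝕜 : Type*} [Fintype n] [DecidableEq n] [RCLike 𝕜]

theorem sum_norm_sq_apply_of_mem_unitaryGroup {W : Matrix n n 𝕜} (hW : W ∈ unitaryGroup n 𝕜)
    (i : n) : ∑ j, ‖W i j‖ ^ 2 = 1 := by
  have h : (W * Wᴴ) i i = 1 := by
    rw [← star_eq_conjTranspose, Unitary.mul_star_self_of_mem hW, one_apply_eq]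
  simp only [mul_apply, conjTranspose_apply, ← starRingEnd_apply, RCLike.mul_conj] at h
  exact_mod_cast h

theorem trace_diagonal_mul_mul_diagonal_mul_conjTranspose (a b : n → ℝ) (W : Matrix n n 𝕜) :
    (diagonal (RCLike.ofReal ∘ a) * W * diagonal (RCLike.ofReal ∘ b) * Wᴴ).trace
      = ((∑ i, ∑ j, a i * b j * ‖W i j‖ ^ 2 : ℝ) : 𝕜) := by
  have hentry : ∀ i j, (diagonal (RCLike.ofReal ∘ a) * W * diagonal (RCLike.ofReal ∘ b) :
      Matrix n n 𝕜) i j = a i * W i j * b j := by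
    simp [diagonal_mul, mul_diagonal]
  simp only [trace, diag, mul_apply (M := diagonal _ * W * diagonal _), hentry,
    conjTranspose_apply, ← starRingEnd_apply]
  push_cast
  refine Finset.sum_congr rfl fun i _ => Finset.sum_congr rfl fun j _ => ?_
  rw [← RCLike.mul_conj]
  ring

namespace IsHermitian

variable {M N : Matrix n n 𝕜}

noncomputable def eigenOverlap (hM : M.IsHermitian) (hN : N.IsHermitian) (i j : n) : ℝ :=
  ‖((hM.eigenvectorUnitary : Matrix n n 𝕜)ᴴ * hN.eigenvectorUnitary) i j‖ ^ 2

theorem sum_eigenOverlap (hM : M.IsHermitian) (hN : N.IsHermitian) (i : n) :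
    ∑ j, hM.eigenOverlap hN i j = 1 :=
  sum_norm_sq_apply_of_mem_unitaryGroup (star hM.eigenvectorUnitary * hN.eigenvectorUnitary).2 i

theorem eigenOverlap_self (hM : M.IsHermitian) (i j : n) :
    hM.eigenOverlap hM i j = if i = j then 1 else 0 := by
  rw [eigenOverlap, ← star_eq_conjTranspose,
    Unitary.star_mul_self_of_mem hM.eigenvectorUnitary.2, one_apply]
  split_ifs <;> simp

theorem trace_cfc_mul_cfc (hM : M.IsHermitian) (hN : N.IsHermitian) (f g : ℝ → ℝ) :
    (cfc f M * cfc g N).trace = ((∑ i, ∑ j,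
      f (hM.eigenvalues i) * g (hN.eigenvalues j) * hM.eigenOverlap hN i j : ℝ) : 𝕜) := by
  rw [hM.cfc_eq, hN.cfc_eq, IsHermitian.cfc, IsHermitian.cfc, Unitary.conjStarAlgAut_apply,
    Unitary.conjStarAlgAut_apply, star_eq_conjTranspose, star_eq_conjTranspose]
  set U : Matrix n n 𝕜 := (hM.eigenvectorUnitary : Matrix n n 𝕜)
  set V : Matrix n n 𝕜 := (hN.eigenvectorUnitary : Matrix n n 𝕜)
  set Df : Matrix n n 𝕜 := diagonal (RCLike.ofReal ∘ f ∘ hM.eigenvalues)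
  set Dg : Matrix n n 𝕜 := diagonal (RCLike.ofReal ∘ g ∘ hN.eigenvalues)
  calc (U * Df * Uᴴ * (V * Dg * Vᴴ)).trace = (U * (Df * Uᴴ * (V * Dg * Vᴴ))).trace := by
        simp only [mul_assoc]
    _ = (Df * (Uᴴ * V) * Dg * (Uᴴ * V)ᴴ).trace := by
        rw [trace_mul_comm]
        simp only [conjTranspose_mul, conjTranspose_conjTranspose, mul_assoc]
    _ = _ := trace_diagonal_mul_mul_diagonal_mul_conjTranspose _ _ _

end IsHermitian

end Matrix

section RelativeEntropy

variable {n : Type*} [Fintype n] [DecidableEq n]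

noncomputable def relEnt (ρ σ : Matrix n n ℂ) : ℝ :=
  (ρ * (matLog ρ - matLog σ)).trace.re

theorem neg_two_log_trace_msqrt_mul_msqrt_le_relEnt {ρ σ : Matrix n n ℂ} (hρ : ρ.PosDef)
    (hρ1 : ρ.trace = 1) (hσ : σ.PosDef) :
    -2 * Real.log ((msqrt ρ * msqrt σ).trace.re) ≤ relEnt ρ σ := by
  have hρH := hρ.isHermitian
  have hσH := hσ.isHermitian
  set p := hρH.eigenvalues
  set q := hσH.eigenvalues
  have hp1 : ∑ i, p i = 1 := by
    simpa [hρ1] using (congrArg Complex.re hρH.trace_eq_sum_eigenvalues).symm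
  have hρρ : (ρ * matLog ρ).trace = ((∑ i, p i * Real.log (p i) : ℝ) : ℂ) := by
    have h := hρH.trace_cfc_mul_cfc hρH id Real.log
    rw [cfc_id ℝ ρ] at h
    rw [matLog, h]
    simp [hρH.eigenOverlap_self, p]
  have hρσ : (ρ * matLog σ).trace
      = ((∑ i, ∑ j, p i * Real.log (q j) * hρH.eigenOverlap hσH i j : ℝ) : ℂ) := by
    have h := hρH.trace_cfc_mul_cfc hσH id Real.log
    rwa [cfc_id ℝ ρ] at h
  rw [relEnt, mul_sub, trace_sub, Complex.sub_re, hρρ, hρσ, msqrt, msqrt,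
    hρH.trace_cfc_mul_cfc hσH]
  simp only [Complex.ofReal_re]
  exact Real.neg_two_log_sum_sqrt_mul_sqrt_le hρ.eigenvalues_pos hσ.eigenvalues_pos
    (fun _ _ => sq_nonneg _) (hρH.sum_eigenOverlap hσH) hp1

end RelativeEntropy

section Marginals

variable {A B C : Type*}

theorem isHermitian_embAB [DecidableEq C] {X : Matrix (A × B) (A × B) ℂ} (hX : X.IsHermitian) :
    (embAB X : Matrix (A × B × C) (A × B × C) ℂ).IsHermitian := by
  ext x y
  simp only [conjTranspose_apply, embAB, star_mul', hX.apply, eq_comm]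
  split_ifs <;> simp

theorem isHermitian_embBC [DecidableEq A] {X : Matrix (B × C) (B × C) ℂ} (hX : X.IsHermitian) :
    (embBC X : Matrix (A × B × C) (A × B × C) ℂ).IsHermitian := by
  ext x y
  simp only [conjTranspose_apply, embBC, star_mul', hX.apply, eq_comm]
  split_ifs <;> simp

theorem isHermitian_embB [DecidableEq A] [DecidableEq C] {X : Matrix B B ℂ} (hX : X.IsHermitian) :
    (embB X : Matrix (A × B × C) (A × B × C) ℂ).IsHermitian := by
  ext x y
  simp only [conjTranspose_apply, embB, star_mul', hX.apply, eq_comm]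
  split_ifs <;> simp

variable [Fintype A] [Fintype B] [Fintype C]

theorem trace_mul_embAB [DecidableEq C] (ρ : Matrix (A × B × C) (A × B × C) ℂ)
    (X : Matrix (A × B) (A × B) ℂ) : (ρ * embAB X).trace = (margAB ρ * X).trace := by
  simp only [trace, diag, mul_apply, embAB, margAB, Fintype.sum_prod_type, mul_ite, mul_one,
    mul_zero, Finset.sum_ite_eq', Finset.mem_univ, if_true, Finset.sum_mul]
  refine Finset.sum_congr rfl fun a _ => Finset.sum_congr rfl fun b _ => ?_
  exact Finset.sum_comm.trans (Finset.sum_congr rfl fun _ _ => Finset.sum_comm)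

theorem trace_mul_embBC [DecidableEq A] (ρ : Matrix (A × B × C) (A × B × C) ℂ)
    (X : Matrix (B × C) (B × C) ℂ) : (ρ * embBC X).trace = (margBC ρ * X).trace := by
  simp only [trace, diag, mul_apply, embBC, margBC, Fintype.sum_prod_type, ite_mul, mul_ite,
    one_mul, zero_mul, mul_zero, Finset.sum_ite_irrel, Finset.sum_const_zero, Finset.sum_ite_eq',
    Finset.mem_univ, if_true, Finset.sum_mul]
  refine Finset.sum_comm.trans (Finset.sum_congr rfl fun _ _ => ?_)
  refine Finset.sum_comm.trans (Finset.sum_congr rfl fun _ _ => ?_)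
  refine Finset.sum_comm.trans (Finset.sum_congr rfl fun _ _ => ?_)
  exact Finset.sum_comm

theorem trace_mul_embB [DecidableEq A] [DecidableEq C] (ρ : Matrix (A × B × C) (A × B × C) ℂ)
    (X : Matrix B B ℂ) : (ρ * embB X).trace = (margB ρ * X).trace := by
  simp only [trace, diag, mul_apply, embB, margB, Fintype.sum_prod_type, ite_mul, mul_ite,
    one_mul, zero_mul, mul_one, mul_zero, Finset.sum_ite_irrel, Finset.sum_const_zero,
    Finset.sum_ite_eq', Finset.mem_univ, if_true, Finset.sum_mul]
  refine Finset.sum_comm.trans (Finset.sum_congr rfl fun _ _ => ?_)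
  refine (Finset.sum_congr rfl fun _ _ => Finset.sum_comm).trans ?_
  exact Finset.sum_comm

end Marginals

section Exponential

-- The lemmas relating `NormedSpace.exp` to the CFC need a C⋆-norm; `mexp` does not depend on it.
open scoped MatrixOrder Matrix.Norms.L2Operator

variable {n : Type*} [Fintype n] [DecidableEq n]

theorem isHermitian_matLog (M : Matrix n n ℂ) : (matLog M).IsHermitian :=
  cfc_predicate Real.log M

theorem matLog_mexp {H : Matrix n n ℂ} (hH : H.IsHermitian) : matLog (mexp H) = H :=
  CFC.log_exp H hH.isSelfAdjoint

theorem posDef_mexp {H : Matrix n n ℂ} (hH : H.IsHermitian) : (mexp H).PosDef := by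
  rw [mexp, ← CFC.real_exp_eq_normedSpace_exp hH.isSelfAdjoint]
  exact ((cfc_isStrictlyPositive_iff Real.exp H).2 fun x _ => Real.exp_pos x).posDef

end Exponential

theorem isHermitian_logSum (ρ : Matrix (A × B × C) (A × B × C) ℂ) : (logSum ρ).IsHermitian :=
  ((isHermitian_embAB (isHermitian_matLog _)).add (isHermitian_embBC (isHermitian_matLog _))).sub
    (isHermitian_embB (isHermitian_matLog _))

theorem condMI_eq_relEnt (ρ : Matrix (A × B × C) (A × B × C) ℂ) :
    condMI ρ = relEnt ρ (mexp (logSum ρ)) := by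
  rw [relEnt, matLog_mexp (isHermitian_logSum ρ), logSum, mul_sub, mul_sub, mul_add, trace_sub,
    trace_sub, trace_add, trace_mul_embAB, trace_mul_embBC, trace_mul_embB]
  simp only [condMI, vnEnt, Complex.sub_re, Complex.add_re]
  ring

theorem condMI_ge_neg_two_log_general (ρ : Matrix (A × B × C) (A × B × C) ℂ)
    (hρ : ρ.PosDef) (h1 : ρ.trace = 1) :
    condMI ρ ≥ -2 * Real.log ((msqrt ρ * msqrt (mexp (logSum ρ))).trace.re) := by
  rw [condMI_eq_relEnt]
  exact neg_two_log_trace_msqrt_mul_msqrt_le_relEnt hρ h1 (posDef_mexp (isHermitian_logSum ρ))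

theorem condMI_ge_neg_two_log (ρ : Matrix (A × B × C) (A × B × C) ℂ)
    (hρ : ρ.PosDef) (h1 : ρ.trace = 1)
    (hAB : (margAB ρ).PosDef) (hBC : (margBC ρ).PosDef) (hB : (margB ρ).PosDef) :
    condMI ρ ≥ -2 * Real.log ((msqrt ρ * msqrt (mexp (logSum ρ))).trace.re) :=
  condMI_ge_neg_two_log_general ρ hρ h1
end
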